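/- arXiv:2307.11376 — 2 statements merged into one kernel-verified Lean document; each statement's English description precedes it below -/
import Mathlib

section
/- First isomorphism theorem for groupoids: Let Γ₁, Γ₂ be groupoids and F : Γ₁ → Γ₂ a full functor. Set H(x) := ker(F : Γ₁(x,x) → Γ₂(Fx,Fx)) for each object x. Then H = (H(x)) is a normal multilocular subgroup of Γ₁, and there is a unique functor F̄ : Γ₁/H → Γ₂ with F̄ ∘ 𝔭 = F, where 𝔭 is the canonical projection. Moreover F̄ is fully faithful. -/
open CategoryTheory

def IsNormalMultilocular {Γ : Type*} [Groupoid Γ] (H : ∀ x : Γ, Set (x ⟶ x)) : Prop :=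
  (∀ x : Γ, 𝟙 x ∈ H x) ∧
  (∀ (x : Γ) (f g : x ⟶ x), f ∈ H x → g ∈ H x → f ≫ g ∈ H x) ∧
  (∀ (x : Γ) (f : x ⟶ x), f ∈ H x → Groupoid.inv f ∈ H x) ∧
  (∀ (x y : Γ) (g : x ⟶ y) (h : x ⟶ x), h ∈ H x → Groupoid.inv g ≫ h ≫ g ∈ H y)

def multHomRel {Γ : Type*} [Groupoid Γ] (H : ∀ x : Γ, Set (x ⟶ x)) : HomRel Γ :=
  fun {x _} f g => ∃ h ∈ H x, f = h ≫ g

/-- The objectwise kernel of a functor between groupoids. -/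
def kerFam {Γ₁ Γ₂ : Type*} [Groupoid Γ₁] [Groupoid Γ₂] (F : Γ₁ ⥤ Γ₂) :
    ∀ x : Γ₁, Set (x ⟶ x) :=
  fun x => {f : x ⟶ x | F.map f = 𝟙 (F.obj x)}

/-!
The kernel family of `F` is normal because `F` preserves composition and inverses. Two parallel
morphisms are congruent modulo the kernel exactly when `F` identifies them (`f ≡ g` iff
`f ≫ g⁻¹ ∈ ker F`), so the quotient relation is `F.homRel`. The factorization through
`Quotient F.homRel` is then the one given by the universal property of the quotient, and it is
faithful by construction and full because `F` is.
-/

namespace CategoryTheory.Quotient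

variable {C D : Type*} [Category C] [Category D] {F : C ⥤ D}

theorem faithful_of_functor_comp_eq (Φ : Quotient F.homRel ⥤ D)
    (hΦ : functor F.homRel ⋙ Φ = F) : Φ.Faithful := by
  obtain rfl := lift_unique F.homRel F (by simp) Φ hΦ
  infer_instance

theorem full_of_functor_comp_eq [F.Full] (Φ : Quotient F.homRel ⥤ D)
    (hΦ : functor F.homRel ⋙ Φ = F) : Φ.Full := by
  obtain rfl := lift_unique F.homRel F (by simp) Φ hΦ
  infer_instance

end CategoryTheory.Quotient

section Kernel

variable {Γ₁ Γ₂ : Type*} [Groupoid Γ₁] [Groupoid Γ₂] (F : Γ₁ ⥤ Γ₂)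

theorem mem_kerFam_iff {x : Γ₁} (f : x ⟶ x) : f ∈ kerFam F x ↔ F.map f = 𝟙 (F.obj x) :=
  Iff.rfl

theorem isNormalMultilocular_kerFam : IsNormalMultilocular (kerFam F) := by
  simp only [IsNormalMultilocular, mem_kerFam_iff, Groupoid.inv_eq_inv]
  refine ⟨F.map_id, ?_, ?_, ?_⟩
  · intro x f g hf hg
    simp [hf, hg]
  · intro x f hf
    simp [hf]
  · intro x y g h hh
    simp [hh]

theorem multHomRel_kerFam : multHomRel (kerFam F) = F.homRel := by
  funext x y f g
  refine propext ⟨?_, fun hfg => ⟨f ≫ Groupoid.inv g, ?_, by simp⟩⟩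
  · rintro ⟨h, hh, rfl⟩
    simp [(mem_kerFam_iff F h).mp hh]
  · simp [mem_kerFam_iff, F.homRel_iff f g |>.mp hfg]

end Kernel

/-- First isomorphism theorem for groupoids: the kernels form a normal multilocular
subgroup, `F` factors uniquely through the quotient, and the factorization is
fully faithful. -/
theorem groupoid_first_iso {Γ₁ Γ₂ : Type*} [Groupoid Γ₁] [Groupoid Γ₂]
    (F : Γ₁ ⥤ Γ₂) (hF : F.Full) :
    IsNormalMultilocular (kerFam F) ∧
    (∃! Fbar : CategoryTheory.Quotient (multHomRel (kerFam F)) ⥤ Γ₂,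
        CategoryTheory.Quotient.functor (multHomRel (kerFam F)) ⋙ Fbar = F) ∧
    (∀ Fbar : CategoryTheory.Quotient (multHomRel (kerFam F)) ⥤ Γ₂,
        CategoryTheory.Quotient.functor (multHomRel (kerFam F)) ⋙ Fbar = F →
        Fbar.Full ∧ Fbar.Faithful) := by
  rw [multHomRel_kerFam]
  refine ⟨isNormalMultilocular_kerFam F, ?_, fun Φ hΦ => ?_⟩
  · have compat : ∀ (x y : Γ₁) (f g : x ⟶ y), F.homRel f g → F.map f = F.map g :=
      fun _ _ f g => (F.homRel_iff f g).mp
    exact ⟨CategoryTheory.Quotient.lift _ F compat, CategoryTheory.Quotient.lift_spec _ F compat,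
      CategoryTheory.Quotient.lift_unique _ F compat⟩
  · exact ⟨CategoryTheory.Quotient.full_of_functor_comp_eq Φ hΦ,
      CategoryTheory.Quotient.faithful_of_functor_comp_eq Φ hΦ⟩
end

section
/- Let Γ₁, Γ₂ be groupoids, F : Γ₁ → Γ₂ a full functor that is bijective on objects, and H the family of kernels H(x) = ker(F on Γ₁(x,x)). If F is surjective on all hom-sets onto the corresponding hom-sets of Γ₂ (i.e., F is full and surjective on objects in the strict sense), then the induced functor F̄ : Γ₁/H → Γ₂ is an isomorphism of categories. -/
open CategoryTheory

/-!
The kernel relation `f ~ g ↔ ∃ h ∈ ker F, f = h ≫ g` is exactly `F.map f = F.map g`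
(take `h = f ≫ g⁻¹`), so `F̄` is faithful. Fullness and bijectivity on objects descend from `F`
to `F̄` because the quotient functor is full and the identity on objects. A fully faithful
functor that is bijective on objects has a strict inverse, `Functor.strictInv`.
-/

namespace CategoryTheory

lemma multHomRel_kerFam_iff {Γ₁ Γ₂ : Type*} [Groupoid Γ₁] [Groupoid Γ₂] (F : Γ₁ ⥤ Γ₂)
    {x y : Γ₁} (f g : x ⟶ y) : multHomRel (kerFam F) f g ↔ F.map f = F.map g := by
  constructor
  · rintro ⟨h, hh : F.map h = 𝟙 _, rfl⟩
    simp [hh]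
  · intro hfg
    refine ⟨f ≫ Groupoid.inv g, ?_, by simp⟩
    simp [kerFam, hfg]

namespace Quotient

variable {C D : Type*} [Category C] [Category D] (r : HomRel C) (G : Quotient r ⥤ D)

lemma full_of_full_functor_comp [(functor r ⋙ G).Full] : G.Full :=
  G.full_of_comp_essSurj (functor r) fun _ _ φ =>
    ⟨(functor r).map ((functor r ⋙ G).preimage φ), (functor r ⋙ G).map_preimage φ⟩

lemma bijective_obj_of_bijective_functor_comp_obj (h : Function.Bijective (functor r ⋙ G).obj) :
    Function.Bijective G.obj :=
  h.comp (f := Quotient.as) ⟨fun ⟨_⟩ ⟨_⟩ h => congrArg _ h, fun x => ⟨⟨x⟩, rfl⟩⟩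

end Quotient

variable {Γ₁ Γ₂ : Type*} [Groupoid Γ₁] [Groupoid Γ₂] (F : Γ₁ ⥤ Γ₂)
  (G : Quotient (multHomRel (kerFam F)) ⥤ Γ₂)

lemma faithful_of_quotient_functor_comp_eq
    (hG : Quotient.functor (multHomRel (kerFam F)) ⋙ G = F) : G.Faithful :=
  G.faithful_of_comp_essSurj (Quotient.functor _) fun _ _ a b hab => by
    obtain ⟨f, rfl⟩ := (Quotient.functor _).map_surjective a
    obtain ⟨g, rfl⟩ := (Quotient.functor _).map_surjective b
    apply Quotient.sound
    rw [multHomRel_kerFam_iff, ← hG]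
    exact hab

lemma isIso_of_quotient_functor_comp_eq [F.Full] (hobj : Function.Bijective F.obj)
    (hG : Quotient.functor (multHomRel (kerFam F)) ⋙ G = F) : G.IsIso := by
  have : (Quotient.functor _ ⋙ G).Full := by rw [hG]; infer_instance
  exact
    { faithful := faithful_of_quotient_functor_comp_eq F G hG
      full := Quotient.full_of_full_functor_comp _ G
      bijective_obj := Quotient.bijective_obj_of_bijective_functor_comp_obj _ G (by rwa [hG]) }

end CategoryTheory

/-- If `F` is full and bijective on objects, then the induced functor
`F̄ : Γ₁/ker F ⥤ Γ₂` is an isomorphism of categories. -/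
theorem induced_functor_isomorphism {Γ₁ Γ₂ : Type*} [Groupoid Γ₁] [Groupoid Γ₂]
    (F : Γ₁ ⥤ Γ₂) (hF : F.Full) (hobj : Function.Bijective F.obj)
    (Fbar : CategoryTheory.Quotient (multHomRel (kerFam F)) ⥤ Γ₂)
    (hFbar : CategoryTheory.Quotient.functor (multHomRel (kerFam F)) ⋙ Fbar = F) :
    ∃ Ginv : Γ₂ ⥤ CategoryTheory.Quotient (multHomRel (kerFam F)),
      Fbar ⋙ Ginv = 𝟭 _ ∧ Ginv ⋙ Fbar = 𝟭 _ := by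
  have := isIso_of_quotient_functor_comp_eq F Fbar hobj hFbar
  exact ⟨Fbar.strictInv, Fbar.asIsomorphism.unit_eq.symm, Fbar.asIsomorphism.counit_eq⟩
end
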